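/- arXiv:2510.03672 — 2 statements merged into one kernel-verified Lean document; each statement's English description precedes it below -/
import Mathlib

section
/- For every integer n ≥ 2, log V(n) ≤ (3/8) · τ(n)² · log n, where V(n) = ∏_{1 ≤ i < j ≤ τ(n)} (d_j − d_i) and 1 = d_1 < d_2 < ⋯ < d_{τ(n)} = n are the positive divisors of n in increasing order. -/
open Finset
open scoped Classical

noncomputable section

/-- Number of positive divisors of `n`. -/
def tau (n : ℕ) : ℕ := n.divisors.card

/-- The positive divisors of `n` in increasing order. -/
def sortedDivisors (n : ℕ) : List ℕ := n.divisors.sort (· ≤ ·)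

/-- The `i`-th divisor of `n` (1-based): `dvs n 1 = 1`, ..., `dvs n (tau n) = n`. -/
def dvs (n i : ℕ) : ℕ := (sortedDivisors n).getD (i - 1) 0

/-- `S(n) = ∑_{i=1}^{τ(n)} (i-1) log d_i`. -/
noncomputable def Sfun (n : ℕ) : ℝ :=
  ∑ i ∈ Finset.Icc 1 (tau n), ((i : ℝ) - 1) * Real.log (dvs n i)

/-- `V(n) = ∏_{1 ≤ i < j ≤ τ(n)} (d_j - d_i)`. -/
noncomputable def Vfun (n : ℕ) : ℝ :=
  ∏ j ∈ Finset.Icc 1 (tau n), ∏ i ∈ Finset.Ico 1 j, ((dvs n j : ℝ) - (dvs n i : ℝ))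

/-- `Ω₂(n) = ∑_{p^α ∥ n} α²`. -/
def Omega2 (n : ℕ) : ℕ := ∑ p ∈ n.primeFactors, (n.factorization p) ^ 2

/-! Since `0 ≤ d_i`, every factor of `V(n)` is at most `d_j`, so
`log V(n) ≤ S(n) = ∑ (i - 1) log d_i`. The involution `d ↦ n / d` reverses the sorted list of
divisors, `d_i d_{τ+1-i} = n`, so also `S(n) = ∑ (τ - i) (log n - log d_i)`. Adding the two
expressions, the `i`-th term is a convex combination bounded by `max (i - 1) (τ - i) · log n`,
and `∑ max (i - 1) (τ - i) ≤ 3τ²/4`. -/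

lemma Nat.div_lt_div_left_of_dvd {n a b : ℕ} (hn : n ≠ 0) (ha : a ∣ n) (hb : b ∣ n)
    (hab : a < b) : n / b < n / a := by
  have hpos : 0 < n / a := Nat.div_pos (Nat.le_of_dvd (Nat.pos_of_ne_zero hn) ha)
    (Nat.pos_of_dvd_of_pos ha (Nat.pos_of_ne_zero hn))
  refine Nat.lt_of_mul_lt_mul_left (a := b) ?_
  calc b * (n / b) = a * (n / a) := by rw [Nat.mul_div_cancel' ha, Nat.mul_div_cancel' hb]
    _ < b * (n / a) := Nat.mul_lt_mul_of_pos_right hab hpos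

lemma length_sortedDivisors (n : ℕ) : (sortedDivisors n).length = tau n :=
  Finset.length_sort _

lemma mem_sortedDivisors {n x : ℕ} : x ∈ sortedDivisors n ↔ x ∈ n.divisors :=
  Finset.mem_sort _

lemma sortedLT_sortedDivisors (n : ℕ) : (sortedDivisors n).SortedLT :=
  Finset.sortedLT_sort _

lemma sortedDivisors_reverse (n : ℕ) :
    (sortedDivisors n).reverse = (sortedDivisors n).map (n / ·) := by
  symm
  refine List.SortedGT.eq_reverse_of_mem_iff_of_sortedLT (fun a => ?_) ?_
    (sortedLT_sortedDivisors n)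
  · simp only [List.mem_map, mem_sortedDivisors, ← Finset.mem_image,
      Nat.image_div_divisors_eq_divisors]
  · refine List.sortedGT_of_getElem_gt_getElem_of_lt fun i j hi hj hji => ?_
    simp only [List.length_map] at hi hj
    have hmem : ∀ k (hk : k < (sortedDivisors n).length), (sortedDivisors n)[k] ∈ n.divisors :=
      fun k hk => mem_sortedDivisors.mp (List.getElem_mem hk)
    simp only [List.getElem_map]
    exact Nat.div_lt_div_left_of_dvd (Nat.mem_divisors.mp (hmem i hi)).2
      (Nat.dvd_of_mem_divisors (hmem j hj)) (Nat.dvd_of_mem_divisors (hmem i hi))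
      ((sortedLT_sortedDivisors n).getElem_lt_getElem_of_lt hji)

lemma dvs_eq_getElem {n k : ℕ} (hk : k < tau n) :
    dvs n (k + 1) = (sortedDivisors n)[k]'(by rwa [length_sortedDivisors]) :=
  List.getD_eq_getElem _ _ _

lemma dvs_mem_divisors {n i : ℕ} (h1 : 1 ≤ i) (h2 : i ≤ tau n) : dvs n i ∈ n.divisors := by
  obtain ⟨k, rfl⟩ := Nat.exists_eq_add_of_le' h1
  rw [dvs_eq_getElem (by omega)]
  exact mem_sortedDivisors.mp (List.getElem_mem _)

lemma dvs_pos {n i : ℕ} (h1 : 1 ≤ i) (h2 : i ≤ tau n) : 0 < dvs n i :=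
  Nat.pos_of_mem_divisors (dvs_mem_divisors h1 h2)

lemma dvs_strictMonoOn (n : ℕ) : StrictMonoOn (dvs n) (Set.Icc 1 (tau n)) := by
  rintro i ⟨hi1, hi2⟩ j ⟨hj1, hj2⟩ hij
  obtain ⟨k, rfl⟩ := Nat.exists_eq_add_of_le' hi1
  obtain ⟨l, rfl⟩ := Nat.exists_eq_add_of_le' hj1
  rw [dvs_eq_getElem (by omega), dvs_eq_getElem (by omega)]
  exact (sortedLT_sortedDivisors n).getElem_lt_getElem_of_lt (by omega)

lemma dvs_mul_dvs_tau_add_one_sub {n i : ℕ} (h1 : 1 ≤ i) (h2 : i ≤ tau n) :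
    dvs n i * dvs n (tau n + 1 - i) = n := by
  obtain ⟨k, rfl⟩ := Nat.exists_eq_add_of_le' h1
  have hk : k < (sortedDivisors n).length := by rw [length_sortedDivisors]; omega
  have hrefl : dvs n (tau n + 1 - (k + 1)) = n / (sortedDivisors n)[k] := by
    rw [show tau n + 1 - (k + 1) = (tau n - 1 - k) + 1 by omega, dvs_eq_getElem (by omega)]
    simp_rw [← List.getElem_map (n / ·) (h := by simpa using hk), ← sortedDivisors_reverse,
      List.getElem_reverse, length_sortedDivisors]
  rw [hrefl, dvs_eq_getElem (by omega)]
  exact Nat.mul_div_cancel' (Nat.dvd_of_mem_divisors (mem_sortedDivisors.mp (List.getElem_mem hk)))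

lemma log_prod_prod_sub_le_sum_mul_log {τ : ℕ} {d : ℕ → ℕ}
    (hd : StrictMonoOn d (Set.Icc 1 τ)) :
    Real.log (∏ j ∈ Icc 1 τ, ∏ i ∈ Ico 1 j, ((d j : ℝ) - d i))
      ≤ ∑ j ∈ Icc 1 τ, ((j : ℝ) - 1) * Real.log (d j) := by
  have hsub_pos : ∀ j ∈ Icc 1 τ, ∀ i ∈ Ico 1 j, (0 : ℝ) < d j - d i := by
    intro j hj i hi
    simp only [mem_Icc, mem_Ico] at hj hi
    exact sub_pos.mpr (by exact_mod_cast hd ⟨hi.1, by omega⟩ ⟨hj.1, hj.2⟩ hi.2)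
  calc Real.log (∏ j ∈ Icc 1 τ, ∏ i ∈ Ico 1 j, ((d j : ℝ) - d i))
      = ∑ j ∈ Icc 1 τ, ∑ i ∈ Ico 1 j, Real.log ((d j : ℝ) - d i) := by
        rw [Real.log_prod fun j hj => (prod_pos (hsub_pos j hj)).ne']
        exact sum_congr rfl fun j hj => Real.log_prod fun i hi => (hsub_pos j hj i hi).ne'
    _ ≤ ∑ j ∈ Icc 1 τ, ∑ _i ∈ Ico 1 j, Real.log (d j) :=
        sum_le_sum fun j hj => sum_le_sum fun i hi =>
          Real.log_le_log (hsub_pos j hj i hi) (by simp)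
    _ = ∑ j ∈ Icc 1 τ, ((j : ℝ) - 1) * Real.log (d j) := by
        refine sum_congr rfl fun j hj => ?_
        rw [sum_const, Nat.card_Ico, nsmul_eq_mul, Nat.cast_sub (mem_Icc.mp hj).1, Nat.cast_one]

lemma log_Vfun_le_Sfun (n : ℕ) : Real.log (Vfun n) ≤ Sfun n :=
  log_prod_prod_sub_le_sum_mul_log (dvs_strictMonoOn n)

lemma sum_range_max_sub_add_two (τ : ℕ) :
    ∑ k ∈ range (τ + 2), max k (τ + 2 - 1 - k)
      = ∑ k ∈ range τ, max k (τ - 1 - k) + (3 * τ + 2) := by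
  rw [sum_range_succ', sum_range_succ]
  have hshift : ∀ k ∈ range τ, max (k + 1) (τ + 2 - 1 - (k + 1)) = max k (τ - 1 - k) + 1 := by
    intro k hk
    have := mem_range.mp hk
    omega
  rw [sum_congr rfl hshift, sum_add_distrib, sum_const, card_range, smul_eq_mul]
  omega

lemma four_mul_sum_range_max_sub_le (τ : ℕ) :
    4 * ∑ k ∈ range τ, max k (τ - 1 - k) ≤ 3 * τ ^ 2 := by
  induction τ using Nat.twoStepInduction with
  | zero => simp
  | one => simp
  | more τ ih _ =>
    rw [sum_range_max_sub_add_two]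
    nlinarith

lemma sum_range_mul_le_of_reflect {τ : ℕ} {L : ℝ} {x : ℕ → ℝ} (hx : ∀ k < τ, 0 ≤ x k)
    (hrefl : ∀ k < τ, x (τ - 1 - k) = L - x k) :
    ∑ k ∈ range τ, (k : ℝ) * x k ≤ 3 / 8 * τ ^ 2 * L := by
  rcases Nat.eq_zero_or_pos τ with rfl | hτ
  · simp
  have hL : 0 ≤ L := by
    linarith [hx 0 hτ, hx (τ - 1 - 0) (by omega), hrefl 0 hτ]
  have hreflected : ∑ k ∈ range τ, (k : ℝ) * x k
      = ∑ k ∈ range τ, ((τ - 1 - k : ℕ) : ℝ) * (L - x k) := by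
    rw [← sum_range_reflect]
    exact sum_congr rfl fun k hk => by rw [hrefl k (mem_range.mp hk)]
  have hterm : ∀ k ∈ range τ, (k : ℝ) * x k + ((τ - 1 - k : ℕ) : ℝ) * (L - x k)
      ≤ ((max k (τ - 1 - k) : ℕ) : ℝ) * L := by
    intro k hk
    have hk := mem_range.mp hk
    have hx' : 0 ≤ L - x k := by rw [← hrefl k hk]; exact hx _ (by omega)
    calc (k : ℝ) * x k + ((τ - 1 - k : ℕ) : ℝ) * (L - x k)
        ≤ ((max k (τ - 1 - k) : ℕ) : ℝ) * x k + ((max k (τ - 1 - k) : ℕ) : ℝ) * (L - x k) := by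
          gcongr
          · exact hx k hk
          · exact le_max_left _ _
          · exact le_max_right _ _
      _ = ((max k (τ - 1 - k) : ℕ) : ℝ) * L := by ring
  have hweights : (4 : ℝ) * ((∑ k ∈ range τ, max k (τ - 1 - k) : ℕ) : ℝ) ≤ 3 * τ ^ 2 := by
    exact_mod_cast four_mul_sum_range_max_sub_le τ
  have hsum := sum_le_sum hterm
  rw [sum_add_distrib, ← hreflected, ← sum_mul, ← Nat.cast_sum] at hsum
  nlinarith

lemma Sfun_eq_sum_range (n : ℕ) :
    Sfun n = ∑ k ∈ range (tau n), (k : ℝ) * Real.log (dvs n (k + 1)) := by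
  rw [Sfun, ← Ico_add_one_right_eq_Icc, sum_Ico_eq_sum_range, Nat.add_sub_cancel]
  refine sum_congr rfl fun k _ => ?_
  rw [add_comm 1 k]
  push_cast
  ring

lemma log_dvs_tau_sub_succ {n k : ℕ} (hk : k < tau n) :
    Real.log (dvs n (tau n - 1 - k + 1)) = Real.log n - Real.log (dvs n (k + 1)) := by
  have hmul : (dvs n (k + 1) : ℝ) * dvs n (tau n - 1 - k + 1) = n := by
    rw [show tau n - 1 - k + 1 = tau n + 1 - (k + 1) by omega]
    exact_mod_cast dvs_mul_dvs_tau_add_one_sub (by omega) (by omega)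
  rw [eq_sub_iff_add_eq', ← Real.log_mul, hmul] <;>
    exact_mod_cast (dvs_pos (by omega) (by omega)).ne'

theorem log_V_upper_general (n : ℕ) :
    Real.log (Vfun n) ≤ 3 / 8 * (tau n : ℝ) ^ 2 * Real.log n :=
  calc Real.log (Vfun n) ≤ Sfun n := log_Vfun_le_Sfun n
    _ = ∑ k ∈ range (tau n), (k : ℝ) * Real.log (dvs n (k + 1)) := Sfun_eq_sum_range n
    _ ≤ 3 / 8 * (tau n : ℝ) ^ 2 * Real.log n :=
      sum_range_mul_le_of_reflect
        (fun _ hk => Real.log_nonneg (by exact_mod_cast dvs_pos (by omega) (by omega)))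
        fun _ => log_dvs_tau_sub_succ

theorem log_V_upper (n : ℕ) (hn : 2 ≤ n) :
    Real.log (Vfun n) ≤ 3 / 8 * (tau n : ℝ) ^ 2 * Real.log n :=
  log_V_upper_general n
end
end

section
/- For every integer n ≥ 2 and every real δ with 0 < δ ≤ 1/2, the number of positive divisors d of n with |log d − (log n)/2| ≥ δ · log n is at most τ(n) · M(n) / (4δ²), where M(n) := max_{p^α ∥ n} (log p^α)/(log n) is the maximum over the prime powers p^α exactly dividing n. -/
open Finset
open scoped Classical

noncomputable section

/-! Chebyshev's inequality for `log d`, `d ∣ n`, around its mean `log n / 2`. The sum `F(n)` of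
squared deviations satisfies `F(mn) = τ(n) F(m) + τ(m) F(n)` for coprime `m, n`, since the centred
logarithms of `d ∣ m` and `e ∣ n` add and each has mean zero (by `d ↦ m / d`); for a prime power `p ^ α` every deviation is at most
`log (p ^ α) / 2`. Hence `4 ∑_{d ∣ n} (log d - log n / 2)² ≤ τ(n) ∑_{p^α ∥ n} (log p^α)²`, and the
last sum is at most `M(n) (log n)²` because the `log p^α` add up to `log n`. -/

open Real

theorem Nat.Coprime.sum_divisors_mul_eq_sum_sum {M : Type*} [AddCommMonoid M] {m n : ℕ}
    (hmn : m.Coprime n) (f : ℕ → M) :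
    ∑ d ∈ (m * n).divisors, f d = ∑ d ∈ m.divisors, ∑ e ∈ n.divisors, f (d * e) := by
  rw [hmn.divisors_mul, sum_map, ← sum_product']
  exact sum_attach _ fun x : ℕ × ℕ => f (x.1 * x.2)

theorem sum_sum_add_sq_of_sum_eq_zero {ι κ R : Type*} [CommRing R] (s : Finset ι) (t : Finset κ)
    (f : ι → R) (g : κ → R) (hf : ∑ i ∈ s, f i = 0) :
    ∑ i ∈ s, ∑ j ∈ t, (f i + g j) ^ 2
      = #t * ∑ i ∈ s, f i ^ 2 + #s * ∑ j ∈ t, g j ^ 2 := by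
  have cross : ∑ i ∈ s, ∑ j ∈ t, 2 * f i * g j = 0 := by
    simp_rw [← mul_sum, ← sum_mul, ← mul_sum, hf, mul_zero, zero_mul]
  simp only [add_sq, sum_add_distrib, cross, add_zero, sum_const, nsmul_eq_mul]
  rw [mul_sum, mul_sum]

theorem sum_divisors_log_sub_half_log (n : ℕ) : ∑ d ∈ n.divisors, (log d - log n / 2) = 0 := by
  have hsymm : ∑ d ∈ n.divisors, log (d : ℝ) = ∑ d ∈ n.divisors, (log n - log d) := by
    conv_lhs => rw [← Nat.sum_div_divisors n fun d => log (d : ℝ)]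
    refine sum_congr rfl fun d hd => ?_
    obtain ⟨hdn, hn⟩ := Nat.mem_divisors.mp hd
    rw [Nat.cast_div_charZero hdn, log_div (by exact_mod_cast hn)
      (by exact_mod_cast (Nat.pos_of_mem_divisors hd).ne')]
  simp only [sum_sub_distrib, sum_const, nsmul_eq_mul] at hsymm ⊢
  linarith

def divisorLogDevSq (n : ℕ) : ℝ := ∑ d ∈ n.divisors, (log d - log n / 2) ^ 2

theorem divisorLogDevSq_mul {m n : ℕ} (hmn : m.Coprime n) :
    divisorLogDevSq (m * n) = tau n * divisorLogDevSq m + tau m * divisorLogDevSq n := by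
  have log_dev_mul : ∀ d ∈ m.divisors, ∀ e ∈ n.divisors,
      log ((d * e : ℕ) : ℝ) - log ((m * n : ℕ) : ℝ) / 2
        = (log d - log m / 2) + (log e - log n / 2) := by
    intro d hd e he
    have hm := (Nat.mem_divisors.mp hd).2
    have hn := (Nat.mem_divisors.mp he).2
    have hd0 := (Nat.pos_of_mem_divisors hd).ne'
    have he0 := (Nat.pos_of_mem_divisors he).ne'
    push_cast
    rw [log_mul (by exact_mod_cast hd0) (by exact_mod_cast he0),
      log_mul (by exact_mod_cast hm) (by exact_mod_cast hn)]
    ring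
  rw [divisorLogDevSq, hmn.sum_divisors_mul_eq_sum_sum,
    sum_congr rfl fun d hd => sum_congr rfl fun e he => by rw [log_dev_mul d hd e he]]
  exact sum_sum_add_sq_of_sum_eq_zero _ _ _ _ (sum_divisors_log_sub_half_log m)

theorem four_mul_divisorLogDevSq_le_tau_mul_log_sq (n : ℕ) :
    4 * divisorLogDevSq n ≤ tau n * log n ^ 2 := by
  calc 4 * divisorLogDevSq n = ∑ d ∈ n.divisors, 4 * (log d - log n / 2) ^ 2 := mul_sum _ _ _
    _ ≤ ∑ d ∈ n.divisors, log n ^ 2 := sum_le_sum fun d hd => by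
        obtain ⟨hdn, hn⟩ := Nat.mem_divisors.mp hd
        have hlog_d_le : log d ≤ log n := log_le_log (by exact_mod_cast Nat.pos_of_mem_divisors hd)
          (by exact_mod_cast Nat.le_of_dvd (Nat.pos_of_ne_zero hn) hdn)
        nlinarith [log_natCast_nonneg d]
    _ = tau n * log n ^ 2 := by rw [sum_const, nsmul_eq_mul, tau]

def primePowerLogSqSum (n : ℕ) : ℝ := n.factorization.sum fun p k => (k * log p) ^ 2

theorem primePowerLogSqSum_mul {m n : ℕ} (hmn : m.Coprime n) :
    primePowerLogSqSum (m * n) = primePowerLogSqSum m + primePowerLogSqSum n := by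
  rw [primePowerLogSqSum, Nat.factorization_mul_of_coprime hmn,
    Finsupp.sum_add_index_of_disjoint hmn.disjoint_primeFactors]
  rfl

theorem primePowerLogSqSum_primePow {p : ℕ} (hp : p.Prime) (k : ℕ) :
    primePowerLogSqSum (p ^ k) = log ((p : ℝ) ^ k) ^ 2 := by
  rw [primePowerLogSqSum, hp.factorization_pow, Finsupp.sum_single_index (by simp), log_pow]

theorem four_mul_divisorLogDevSq_le (n : ℕ) :
    4 * divisorLogDevSq n ≤ tau n * primePowerLogSqSum n := by
  induction n using Nat.recOnPosPrimePosCoprime with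
  | prime_pow p k hp _ =>
    simpa [primePowerLogSqSum_primePow hp] using four_mul_divisorLogDevSq_le_tau_mul_log_sq (p ^ k)
  | zero => simp [divisorLogDevSq, tau]
  | one => simp [divisorLogDevSq, primePowerLogSqSum]
  | coprime a b _ _ hab iha ihb =>
    have htau : tau (a * b) = tau a * tau b := hab.card_divisors_mul
    rw [divisorLogDevSq_mul hab, primePowerLogSqSum_mul hab, htau, Nat.cast_mul]
    linarith [mul_le_mul_of_nonneg_left iha (Nat.cast_nonneg (tau b) : (0 : ℝ) ≤ tau b),
      mul_le_mul_of_nonneg_left ihb (Nat.cast_nonneg (tau a) : (0 : ℝ) ≤ tau a)]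

theorem primePowerLogSqSum_le_mul_log {n : ℕ} {c : ℝ}
    (hc : ∀ p ∈ n.primeFactors, n.factorization p * log p ≤ c) :
    primePowerLogSqSum n ≤ c * log n := by
  rw [primePowerLogSqSum, log_nat_eq_sum_factorization, Finsupp.sum, Finsupp.sum, mul_sum,
    Nat.support_factorization]
  refine sum_le_sum fun p hp => ?_
  rw [sq]
  exact mul_le_mul_of_nonneg_right (hc p hp) (by positivity)

theorem card_filter_le_abs_mul_sq_le {ι : Type*} (s : Finset ι) (f : ι → ℝ) {ε : ℝ} (hε : 0 ≤ ε) :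
    #(s.filter fun i => ε ≤ |f i|) * ε ^ 2 ≤ ∑ i ∈ s, f i ^ 2 := by
  calc (#(s.filter fun i => ε ≤ |f i|) : ℝ) * ε ^ 2
        = ∑ i ∈ s.filter fun i => ε ≤ |f i|, ε ^ 2 := by rw [sum_const, nsmul_eq_mul]
    _ ≤ ∑ i ∈ s.filter fun i => ε ≤ |f i|, f i ^ 2 := sum_le_sum fun i hi =>
        sq_abs (f i) ▸ pow_le_pow_left₀ hε (mem_filter.mp hi).2 2
    _ ≤ ∑ i ∈ s, f i ^ 2 :=
        sum_le_sum_of_subset_of_nonneg (filter_subset _ _) fun _ _ _ => sq_nonneg _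

theorem count_far_divisors_max_general (n : ℕ) (hn : 2 ≤ n) (δ : ℝ) (hδ0 : 0 < δ) :
    ((n.divisors.filter (fun d => δ * Real.log n ≤ |Real.log d - Real.log n / 2|)).card : ℝ)
      ≤ (tau n : ℝ)
          * (n.primeFactors.sup' (Nat.nonempty_primeFactors.mpr hn)
              (fun p => Real.log (p ^ n.factorization p) / Real.log n))
          / (4 * δ ^ 2) := by
  set M := n.primeFactors.sup' (Nat.nonempty_primeFactors.mpr hn)
    (fun p => log ((p : ℝ) ^ n.factorization p) / log n)
  have hlog_n : 0 < log n := log_pos (by exact_mod_cast hn)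
  have hM : ∀ p ∈ n.primeFactors, n.factorization p * log p ≤ M * log n := fun p hp => by
    rw [← log_pow, ← div_le_iff₀ hlog_n]
    exact le_sup' (fun p : ℕ => log ((p : ℝ) ^ n.factorization p) / log n) hp
  have hfar := card_filter_le_abs_mul_sq_le (n.divisors.image (Nat.cast : ℕ → ℝ))
    (fun x => log x - log n / 2) (by positivity : 0 ≤ δ * log n)
  rw [sum_image fun _ _ _ _ h => Nat.cast_injective h] at hfar
  have hvar := four_mul_divisorLogDevSq_le n
  have hG := primePowerLogSqSum_le_mul_log hM
  -- The statement's `n.divisors` is coerced to a `Finset ℝ` through the `Finset` monad.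
  rw [show (do let d ← n.divisors; pure (d : ℝ)) = n.divisors.image (Nat.cast : ℕ → ℝ) from
    sup_singleton_apply _ _, le_div_iff₀ (by positivity)]
  refine le_of_mul_le_mul_right ?_ (pow_pos hlog_n 2)
  calc _ = 4 * (_ * (δ * log n) ^ 2) := by ring
    _ ≤ 4 * divisorLogDevSq n := by gcongr; exact hfar
    _ ≤ tau n * primePowerLogSqSum n := hvar
    _ ≤ tau n * (M * log n * log n) := by gcongr
    _ = _ := by ring

theorem count_far_divisors_max (n : ℕ) (hn : 2 ≤ n) (δ : ℝ) (hδ0 : 0 < δ) (hδ : δ ≤ 1 / 2) :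
    ((n.divisors.filter (fun d => δ * Real.log n ≤ |Real.log d - Real.log n / 2|)).card : ℝ)
      ≤ (tau n : ℝ)
          * (n.primeFactors.sup' (Nat.nonempty_primeFactors.mpr hn)
              (fun p => Real.log (p ^ n.factorization p) / Real.log n))
          / (4 * δ ^ 2) :=
  count_far_divisors_max_general n hn δ hδ0
end
end
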